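/- arXiv:1007.0959 — 4 statements merged into one kernel-verified Lean document; each statement's English description precedes it below -/
import Mathlib

section
/- Let μ₀ and μ₁ be mutually absolutely continuous probability measures on a measurable space Ω with Radon–Nikodym derivative dμ₁/dμ₀ positive everywhere, and let x(ω) = log(dμ₁/dμ₀)(ω). Let ν₀ be the pushforward of μ₀ under x and ν₁ the pushforward of μ₁ under x. Then ν₁ is absolutely continuous with respect to ν₀, and for ν₀-almost every real number r, log(dν₁/dν₀)(r) = r. -/
open MeasureTheory Real

/-- The pushforward of the log-likelihood ratio: ν₁ ≪ ν₀ and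
log(dν₁/dν₀)(r) = r for ν₀-a.e. r. -/
theorem stmt0 {Ω : Type*} [MeasurableSpace Ω]
    (μ₀ μ₁ : Measure Ω) [IsProbabilityMeasure μ₀] [IsProbabilityMeasure μ₁]
    (h10 : μ₁ ≪ μ₀) (h01 : μ₀ ≪ μ₁)
    (hpos : ∀ ω, 0 < (μ₁.rnDeriv μ₀ ω).toReal)
    (x : Ω → ℝ) (hx : x = fun ω => Real.log (μ₁.rnDeriv μ₀ ω).toReal) :
    (μ₁.map x) ≪ (μ₀.map x) ∧
      ∀ᵐ r ∂(μ₀.map x), Real.log (((μ₁.map x).rnDeriv (μ₀.map x)) r).toReal = r := by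
  have hxm : Measurable x := by
    rw [hx]
    exact (Measure.measurable_rnDeriv μ₁ μ₀).ennreal_toReal.log
  have hg : Measurable fun r : ℝ => ENNReal.ofReal (Real.exp r) :=
    (Real.measurable_exp).ennreal_ofReal
  -- pointwise: ofReal (exp (x ω)) = rnDeriv μ₁ μ₀ ω
  have hpt : ∀ ω, ENNReal.ofReal (Real.exp (x ω)) = μ₁.rnDeriv μ₀ ω := by
    intro ω
    have h0 := hpos ω
    have hne : μ₁.rnDeriv μ₀ ω ≠ ⊤ := by
      intro h
      rw [h] at h0
      simp at h0
    rw [hx]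
    simp only
    rw [Real.exp_log h0, ENNReal.ofReal_toReal hne]
  -- μ₁.map x = (μ₀.map x).withDensity g
  have hmap : μ₁.map x = (μ₀.map x).withDensity (fun r => ENNReal.ofReal (Real.exp r)) := by
    ext s hs
    rw [Measure.map_apply hxm hs, withDensity_apply _ hs,
      setLIntegral_map hs hg hxm]
    rw [← Measure.setLIntegral_rnDeriv h10 (x ⁻¹' s)]
    exact lintegral_congr fun ω => by rw [hpt]
  refine ⟨?_, ?_⟩
  · rw [hmap]
    exact withDensity_absolutelyContinuous _ _
  · have hrn : (μ₁.map x).rnDeriv (μ₀.map x)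
        =ᵐ[μ₀.map x] fun r => ENNReal.ofReal (Real.exp r) := by
      rw [hmap]
      exact Measure.rnDeriv_withDensity _ hg
    filter_upwards [hrn] with r hr
    rw [hr, ENNReal.toReal_ofReal (Real.exp_pos r).le, Real.log_exp]
end

section
/- Let ν₀ be a probability measure on ℝ. Then for fixed b, the function a ↦ log( (∫_{(a,b]} e^r dν₀(r)) / ν₀((a,b]) ) is monotone non-decreasing on the set of a < b with ν₀((a,b]) > 0; similarly, for fixed a it is non-decreasing in b. -/
open MeasureTheory Real

lemma expInt (ν : Measure ℝ) [IsFiniteMeasure ν] (a b : ℝ) :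
    IntegrableOn Real.exp (Set.Ioc a b) ν := by
  apply Measure.integrableOn_of_bounded (M := Real.exp b) (measure_lt_top ν _).ne
    (Real.continuous_exp.aestronglyMeasurable)
  filter_upwards [ae_restrict_mem measurableSet_Ioc] with x hx
  rw [Real.norm_eq_abs, abs_of_pos (Real.exp_pos x)]
  exact Real.exp_le_exp.2 hx.2

lemma int_le (ν : Measure ℝ) [IsFiniteMeasure ν] (a b : ℝ) :
    ∫ r in Set.Ioc a b, Real.exp r ∂ν ≤ Real.exp b * (ν (Set.Ioc a b)).toReal := by
  have := setIntegral_mono_on (μ := ν) (s := Set.Ioc a b) (g := fun _ => Real.exp b)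
    (expInt ν a b) (integrableOn_const (measure_lt_top ν _).ne) measurableSet_Ioc
    (fun x hx => Real.exp_le_exp.2 hx.2)
  simpa [setIntegral_const, mul_comm, Measure.real] using this

lemma int_ge (ν : Measure ℝ) [IsFiniteMeasure ν] (a b : ℝ) :
    Real.exp a * (ν (Set.Ioc a b)).toReal ≤ ∫ r in Set.Ioc a b, Real.exp r ∂ν := by
  exact setIntegral_ge_of_const_le_real measurableSet_Ioc (measure_lt_top ν _).ne
    (fun x hx => Real.exp_le_exp.2 hx.1.le) (expInt ν a b)

lemma split (ν : Measure ℝ) [IsFiniteMeasure ν] {a a' b : ℝ} (h1 : a ≤ a') (h2 : a' ≤ b) :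
    (∫ r in Set.Ioc a b, Real.exp r ∂ν)
      = (∫ r in Set.Ioc a a', Real.exp r ∂ν) + (∫ r in Set.Ioc a' b, Real.exp r ∂ν) ∧
    (ν (Set.Ioc a b)).toReal = (ν (Set.Ioc a a')).toReal + (ν (Set.Ioc a' b)).toReal := by
  have hu : Set.Ioc a a' ∪ Set.Ioc a' b = Set.Ioc a b := Set.Ioc_union_Ioc_eq_Ioc h1 h2
  have hd : Disjoint (Set.Ioc a a') (Set.Ioc a' b) := by
    apply Set.disjoint_left.2
    rintro x ⟨_, h⟩ ⟨h', _⟩; exact absurd h (not_le.2 h')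
  constructor
  · rw [← hu, setIntegral_union hd measurableSet_Ioc (expInt ν a a') (expInt ν a' b)]
  · rw [← hu, measure_union hd measurableSet_Ioc, ENNReal.toReal_add
      (measure_lt_top ν _).ne (measure_lt_top ν _).ne]

/-- Monotonicity of x(a,b), the log of the conditional expectation of e^X
given X ∈ (a,b] under ν₀, in both endpoints. -/
theorem stmt5 (ν₀ : Measure ℝ) [IsProbabilityMeasure ν₀] :
    (∀ a a' b : ℝ, a ≤ a' → a' < b → 0 < ν₀ (Set.Ioc a' b) →
      Real.log ((∫ r in Set.Ioc a b, Real.exp r ∂ν₀) / (ν₀ (Set.Ioc a b)).toReal)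
        ≤ Real.log ((∫ r in Set.Ioc a' b, Real.exp r ∂ν₀) / (ν₀ (Set.Ioc a' b)).toReal)) ∧
    (∀ a b b' : ℝ, a < b → b ≤ b' → 0 < ν₀ (Set.Ioc a b) →
      Real.log ((∫ r in Set.Ioc a b, Real.exp r ∂ν₀) / (ν₀ (Set.Ioc a b)).toReal)
        ≤ Real.log ((∫ r in Set.Ioc a b', Real.exp r ∂ν₀) / (ν₀ (Set.Ioc a b')).toReal)) := by
  constructor
  · intro a a' b haa hab hpos
    obtain ⟨hI, hm⟩ := split ν₀ haa hab.le
    set I₁ := ∫ r in Set.Ioc a a', Real.exp r ∂ν₀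
    set I₂ := ∫ r in Set.Ioc a' b, Real.exp r ∂ν₀
    set m₁ := (ν₀ (Set.Ioc a a')).toReal
    set m₂ := (ν₀ (Set.Ioc a' b)).toReal
    have hm₁ : 0 ≤ m₁ := ENNReal.toReal_nonneg
    have hm₂ : 0 < m₂ := ENNReal.toReal_pos hpos.ne' (measure_lt_top ν₀ _).ne
    have h1 : I₁ ≤ Real.exp a' * m₁ := int_le ν₀ a a'
    have h2 : Real.exp a' * m₂ ≤ I₂ := int_ge ν₀ a' b
    have hI₂pos : 0 < I₂ := lt_of_lt_of_le (by positivity) h2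
    have hI₁ : 0 ≤ I₁ := setIntegral_nonneg measurableSet_Ioc (fun x _ => (Real.exp_pos x).le)
    have key : I₁ * m₂ ≤ I₂ * m₁ := by nlinarith [Real.exp_pos a']
    have hdiv : (I₁ + I₂) / (m₁ + m₂) ≤ I₂ / m₂ := by
      rw [div_le_div_iff₀ (by linarith) hm₂]; nlinarith
    rw [hI, hm]
    exact Real.log_le_log (by positivity) hdiv
  · intro a b b' hab hbb hpos
    obtain ⟨hI, hm⟩ := split ν₀ hab.le hbb
    set I₁ := ∫ r in Set.Ioc a b, Real.exp r ∂ν₀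
    set I₂ := ∫ r in Set.Ioc b b', Real.exp r ∂ν₀
    set m₁ := (ν₀ (Set.Ioc a b)).toReal
    set m₂ := (ν₀ (Set.Ioc b b')).toReal
    have hm₂ : 0 ≤ m₂ := ENNReal.toReal_nonneg
    have hm₁ : 0 < m₁ := ENNReal.toReal_pos hpos.ne' (measure_lt_top ν₀ _).ne
    have h1 : I₁ ≤ Real.exp b * m₁ := int_le ν₀ a b
    have h2 : Real.exp b * m₂ ≤ I₂ := int_ge ν₀ b b'
    have hI₁pos : 0 < I₁ := lt_of_lt_of_le (by positivity) (int_ge ν₀ a b)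
    have key : I₁ * m₂ ≤ I₂ * m₁ := by nlinarith [Real.exp_pos b]
    have hdiv : I₁ / m₁ ≤ (I₁ + I₂) / (m₁ + m₂) := by
      rw [div_le_div_iff₀ hm₁ (by linarith)]; nlinarith
    rw [hI, hm]
    exact Real.log_le_log (by positivity) hdiv
end

section
/- Let X₁,…,Xₙ, X̂₁,…,X̂ₙ, A₁,…,Aₙ, B₁,…,Bₙ be reals with Aᵢ < Xᵢ ≤ Bᵢ and Aᵢ < X̂ᵢ < Bᵢ for each i, and suppose ∑ᵢ(Bᵢ − Aᵢ) < |∑ᵢ Xᵢ|. Define Ŷᵢ = Xᵢ + ∑_{j≠i} X̂ⱼ. Then for every i, Ŷᵢ has the same (strict) sign as ∑ⱼ Xⱼ; in particular either Ŷᵢ > 0 for all i, or Ŷᵢ < 0 for all i. -/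
/-! Writing `S = ∑ⱼ Xⱼ`, we have `Ŷᵢ - S = ∑_{j≠i} (X̂ⱼ - Xⱼ)`, and both `Xⱼ` and `X̂ⱼ` lie in
`(Aⱼ, Bⱼ]`, so `|Ŷᵢ - S| ≤ ∑ⱼ (Bⱼ - Aⱼ) < |S|`. A number closer to `S` than `|S|` has the
strict sign of `S`. -/

open Finset

section

variable {R : Type*} [AddCommGroup R] [LinearOrder R] [IsOrderedAddMonoid R]

theorem abs_sub_le_of_mem_Ioc {a b x y : R} (hx : x ∈ Set.Ioc a b) (hy : y ∈ Set.Ioc a b) :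
    |y - x| ≤ b - a := by
  rw [abs_sub_le_iff]
  exact ⟨sub_le_sub hy.2 hx.1.le, sub_le_sub hx.2 hy.1.le⟩

theorem pos_and_neg_of_abs_sub_lt_abs {z w : R} (h : |z - w| < |w|) :
    (0 < w → 0 < z) ∧ (w < 0 → z < 0) := by
  constructor
  · intro hw
    rw [abs_of_pos hw] at h
    simpa using (abs_lt.mp h).1
  · intro hw
    rw [abs_of_neg hw] at h
    have hlt := (abs_lt.mp h).2
    rwa [← zero_sub, sub_lt_sub_iff_right] at hlt

theorem abs_add_sum_erase_sub_sum_le {ι : Type*} [DecidableEq ι] {s : Finset ι} {i : ι}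
    (hi : i ∈ s) (x y : ι → R) :
    |x i + ∑ j ∈ s.erase i, y j - ∑ j ∈ s, x j| ≤ ∑ j ∈ s.erase i, |y j - x j| := by
  rw [← add_sum_erase s x hi, add_sub_add_left_eq_sub, ← sum_sub_distrib]
  exact abs_sum_le_sum_abs _ _

end

/-- Arithmetic core of the unanimity condition: when the total uncertainty
∑(Bᵢ−Aᵢ) is less than |∑Xᵢ|, every Ŷᵢ = Xᵢ + ∑_{j≠i} X̂ⱼ has the same strict
sign as ∑ⱼ Xⱼ. -/
theorem stmt8 (n : ℕ) (X Xhat A B : Fin n → ℝ)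
    (hX : ∀ i, A i < X i ∧ X i ≤ B i)
    (hhat : ∀ i, A i < Xhat i ∧ Xhat i < B i)
    (hsum : ∑ i, (B i - A i) < |∑ i, X i|) :
    (∀ i, 0 < ∑ j, X j → 0 < X i + ∑ j ∈ Finset.univ.erase i, Xhat j) ∧
    (∀ i, ∑ j, X j < 0 → X i + ∑ j ∈ Finset.univ.erase i, Xhat j < 0) := by
  have hwidth : ∀ j, 0 ≤ B j - A j := fun j => by linarith [hX j]
  have hclose : ∀ i, |X i + ∑ j ∈ univ.erase i, Xhat j - ∑ j, X j| < |∑ j, X j| := fun i =>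
    calc |X i + ∑ j ∈ univ.erase i, Xhat j - ∑ j, X j|
        ≤ ∑ j ∈ univ.erase i, |Xhat j - X j| := abs_add_sum_erase_sub_sum_le (mem_univ i) X Xhat
      _ ≤ ∑ j ∈ univ.erase i, (B j - A j) := sum_le_sum fun j _ =>
          abs_sub_le_of_mem_Ioc (hX j) ⟨(hhat j).1, (hhat j).2.le⟩
      _ ≤ ∑ j, (B j - A j) := sum_le_sum_of_subset_of_nonneg (erase_subset i univ)
          fun j _ _ => hwidth j
      _ < |∑ j, X j| := hsum
  exact ⟨fun i => (pos_and_neg_of_abs_sub_lt_abs (hclose i)).1,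
    fun i => (pos_and_neg_of_abs_sub_lt_abs (hclose i)).2⟩
end

section
/- Let (G_t) be a filtration and S a {0,1}-valued random variable. For each t, let V_t = 1 iff P(S = 1 | G_t) > 1/2. If G_{t-1} ⊆ G_t, then P(V_t = S) ≥ P(V_{t-1} = S). -/
open MeasureTheory

/-- A {0,1}-valued measurable function is integrable. -/
lemma stmt11_int {Ω : Type*} [m0 : MeasurableSpace Ω]
    (μ : Measure Ω) [IsProbabilityMeasure μ]
    (S : Ω → ℝ) (hS : ∀ ω, S ω = 0 ∨ S ω = 1) (hSmeas : Measurable S) :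
    Integrable S μ := by
  refine (integrable_const (1:ℝ)).mono' hSmeas.aestronglyMeasurable ?_
  filter_upwards with ω
  rcases hS ω with h | h <;> simp [h]

/-- The probability of a correct vote with decision set `A ∈ m` equals
`∫_A E[S|m] + ∫_{Aᶜ} (1 - E[S|m])`.  Note the binder order: `m0` is the most
recently introduced `MeasurableSpace` instance, so instance search finds it. -/
lemma stmt11_key {Ω : Type*} (m : MeasurableSpace Ω) [m0 : MeasurableSpace Ω]
    (hm : m ≤ m0) (μ : Measure Ω) [IsProbabilityMeasure μ]
    (S : Ω → ℝ) (hS : ∀ ω, S ω = 0 ∨ S ω = 1) (hSmeas : Measurable S)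
    (A : Set Ω) (hA : MeasurableSet[m] A) :
    (μ ((A ∩ S ⁻¹' {1}) ∪ (Aᶜ ∩ S ⁻¹' {0}))).toReal
      = (∫ ω in A, (μ[S|m]) ω ∂μ) + ∫ ω in Aᶜ, (1 - (μ[S|m]) ω) ∂μ := by
  have hSint : Integrable S μ := stmt11_int μ S hS hSmeas
  have hA0 : MeasurableSet A := hm A hA
  have h1 : MeasurableSet (S ⁻¹' {1}) := hSmeas (measurableSet_singleton 1)
  have h0 : MeasurableSet (S ⁻¹' {0}) := hSmeas (measurableSet_singleton 0)
  have hdisj : Disjoint (A ∩ S ⁻¹' {1}) (Aᶜ ∩ S ⁻¹' {0}) :=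
    Disjoint.mono Set.inter_subset_left Set.inter_subset_left disjoint_compl_right
  have hunion : μ ((A ∩ S ⁻¹' {1}) ∪ (Aᶜ ∩ S ⁻¹' {0}))
      = μ (A ∩ S ⁻¹' {1}) + μ (Aᶜ ∩ S ⁻¹' {0}) :=
    measure_union hdisj (hA0.compl.inter h0)
  have hSind : ∀ ω, S ω = (S ⁻¹' {1}).indicator (fun _ => (1:ℝ)) ω := by
    intro ω
    rcases hS ω with h | h <;> simp [Set.indicator, Set.mem_preimage, h]
  have hSind0 : ∀ ω, 1 - S ω = (S ⁻¹' {0}).indicator (fun _ => (1:ℝ)) ω := by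
    intro ω
    rcases hS ω with h | h <;> simp [Set.indicator, Set.mem_preimage, h]
  have hIA : ∫ ω in A, S ω ∂μ = (μ (A ∩ S ⁻¹' {1})).toReal := by
    have he : ∫ ω in A, S ω ∂μ = ∫ ω in A, (S ⁻¹' {1}).indicator (fun _ => (1:ℝ)) ω ∂μ :=
      integral_congr_ae (Filter.Eventually.of_forall fun ω => hSind ω)
    rw [he, setIntegral_indicator h1]
    simp [Set.inter_comm, measureReal_def]
  have hIAc : ∫ ω in Aᶜ, (1 - S ω) ∂μ = (μ (Aᶜ ∩ S ⁻¹' {0})).toReal := by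
    have he : ∫ ω in Aᶜ, (1 - S ω) ∂μ
        = ∫ ω in Aᶜ, (S ⁻¹' {0}).indicator (fun _ => (1:ℝ)) ω ∂μ :=
      integral_congr_ae (Filter.Eventually.of_forall fun ω => hSind0 ω)
    rw [he, setIntegral_indicator h0]
    simp [Set.inter_comm, measureReal_def]
  have hcondA : ∫ ω in A, (μ[S|m]) ω ∂μ = ∫ ω in A, S ω ∂μ :=
    setIntegral_condExp hm hSint hA
  have hcondAc : ∫ ω in Aᶜ, (1 - (μ[S|m]) ω) ∂μ = ∫ ω in Aᶜ, (1 - S ω) ∂μ := by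
    rw [integral_sub (integrable_const 1).integrableOn integrable_condExp.integrableOn,
        integral_sub (integrable_const 1).integrableOn hSint.integrableOn,
        setIntegral_condExp hm hSint hA.compl]
  rw [hunion, ENNReal.toReal_add (measure_ne_top μ _) (measure_ne_top μ _),
    hcondA, hcondAc, hIA, hIAc]

/-- Pointwise optimality of the MAP decision set `{f > 1/2}`. -/
lemma stmt11_cmp {Ω : Type*} [m0 : MeasurableSpace Ω]
    (μ : Measure Ω) [IsProbabilityMeasure μ]
    (f : Ω → ℝ) (hf : Integrable f μ)
    (A : Set Ω) (hA : MeasurableSet A) (hB : MeasurableSet {ω | (1:ℝ)/2 < f ω}) :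
    (∫ ω in A, f ω ∂μ) + ∫ ω in Aᶜ, (1 - f ω) ∂μ
      ≤ (∫ ω in {ω | (1:ℝ)/2 < f ω}, f ω ∂μ)
        + ∫ ω in {ω | (1:ℝ)/2 < f ω}ᶜ, (1 - f ω) ∂μ := by
  set B : Set Ω := {ω | (1:ℝ)/2 < f ω} with hBdef
  have hone : Integrable (fun ω => 1 - f ω) μ := (integrable_const 1).sub hf
  set g : Set Ω → Ω → ℝ :=
    fun A ω => A.indicator f ω + Aᶜ.indicator (fun ω => 1 - f ω) ω with hg
  have hgint : ∀ (A : Set Ω), MeasurableSet A → Integrable (g A) μ :=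
    fun A hA => (hf.indicator hA).add (hone.indicator hA.compl)
  have key : ∀ (A : Set Ω), MeasurableSet A →
      (∫ ω in A, f ω ∂μ) + ∫ ω in Aᶜ, (1 - f ω) ∂μ = ∫ ω, g A ω ∂μ := by
    intro A hA
    rw [← integral_add_compl hA (hgint A hA)]
    congr 1
    · exact (setIntegral_congr_fun hA (fun ω hω => by
        simp [hg, Set.indicator, hω])).symm
    · exact (setIntegral_congr_fun hA.compl (fun ω hω => by
        simp only [Set.mem_compl_iff] at hω
        simp [hg, Set.indicator, hω])).symm
  rw [key A hA, key B hB]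
  refine integral_mono (hgint A hA) (hgint B hB) ?_
  intro ω
  by_cases h2' : ω ∈ B
  · have hfω : (1:ℝ)/2 < f ω := h2'
    by_cases h1' : ω ∈ A <;> simp [hg, Set.indicator, h1', h2'] <;> linarith
  · have hfω : ¬ ((1:ℝ)/2 < f ω) := h2'
    push_neg at hfω
    by_cases h1' : ω ∈ A <;> simp [hg, Set.indicator, h1', h2'] <;> linarith

/-- Monotonicity: the MAP vote with respect to a larger σ-algebra is correct
with at least as high probability. -/
theorem stmt11 {Ω : Type*} (m₁ m₂ : MeasurableSpace Ω) [m0 : MeasurableSpace Ω]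
    (μ : Measure Ω) [IsProbabilityMeasure μ]
    (h12 : m₁ ≤ m₂) (h2 : m₂ ≤ m0)
    (S : Ω → ℝ) (hS : ∀ ω, S ω = 0 ∨ S ω = 1) (hSmeas : Measurable S) :
    μ {ω | ((1 : ℝ)/2 < (μ[S | m₁]) ω ∧ S ω = 1) ∨
           (¬((1 : ℝ)/2 < (μ[S | m₁]) ω) ∧ S ω = 0)}
      ≤ μ {ω | ((1 : ℝ)/2 < (μ[S | m₂]) ω ∧ S ω = 1) ∨
               (¬((1 : ℝ)/2 < (μ[S | m₂]) ω) ∧ S ω = 0)} := by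
  have h1 : m₁ ≤ m0 := h12.trans h2
  have hSmeas0 : Measurable[m0] S := hSmeas
  set f₁ := μ[S|m₁] with hf₁
  set f₂ := μ[S|m₂] with hf₂
  set A₁ : Set Ω := {ω | (1:ℝ)/2 < f₁ ω} with hA₁def
  set A₂ : Set Ω := {ω | (1:ℝ)/2 < f₂ ω} with hA₂def
  have hA₁m : MeasurableSet[m₁] A₁ :=
    (stronglyMeasurable_condExp (m := m₁)).measurable measurableSet_Ioi
  have hA₂m : MeasurableSet[m₂] A₂ :=
    (stronglyMeasurable_condExp (m := m₂)).measurable measurableSet_Ioi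
  have hA₁m₂ : MeasurableSet[m₂] A₁ := h12 _ hA₁m
  have hset : ∀ (A : Set Ω),
      {ω | (ω ∈ A ∧ S ω = 1) ∨ (ω ∉ A ∧ S ω = 0)} = (A ∩ S ⁻¹' {1}) ∪ (Aᶜ ∩ S ⁻¹' {0}) := by
    intro A
    ext ω
    simp [Set.mem_preimage]
  have hC₁ : {ω | ((1 : ℝ)/2 < f₁ ω ∧ S ω = 1) ∨ (¬((1 : ℝ)/2 < f₁ ω) ∧ S ω = 0)}
      = (A₁ ∩ S ⁻¹' {1}) ∪ (A₁ᶜ ∩ S ⁻¹' {0}) := hset A₁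
  have hC₂ : {ω | ((1 : ℝ)/2 < f₂ ω ∧ S ω = 1) ∨ (¬((1 : ℝ)/2 < f₂ ω) ∧ S ω = 0)}
      = (A₂ ∩ S ⁻¹' {1}) ∪ (A₂ᶜ ∩ S ⁻¹' {0}) := hset A₂
  rw [hC₁, hC₂]
  have hk₁ := stmt11_key (m0 := m0) m₂ h2 μ S hS hSmeas0 A₁ hA₁m₂
  have hk₂ := stmt11_key (m0 := m0) m₂ h2 μ S hS hSmeas0 A₂ hA₂m
  rw [← hf₂] at hk₁ hk₂
  have hA₁0 : MeasurableSet[m0] A₁ := h1 _ hA₁m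
  have hA₂0 : MeasurableSet[m0] A₂ := h2 _ hA₂m
  have hf₂int : Integrable f₂ μ := integrable_condExp (m := m₂)
  have hcmp := stmt11_cmp (m0 := m0) μ f₂ hf₂int A₁ hA₁0 hA₂0
  rw [← hA₂def] at hcmp
  have hle : (μ ((A₁ ∩ S ⁻¹' {1}) ∪ (A₁ᶜ ∩ S ⁻¹' {0}))).toReal
      ≤ (μ ((A₂ ∩ S ⁻¹' {1}) ∪ (A₂ᶜ ∩ S ⁻¹' {0}))).toReal := by
    rw [hk₁, hk₂]; exact hcmp
  exact (ENNReal.toReal_le_toReal (measure_ne_top μ _) (measure_ne_top μ _)).mp hle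
end
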